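/- arXiv:2309.06856 — 5 statements merged into one kernel-verified Lean document; each statement's English description precedes it below -/
import Mathlib

section
/- Let a₀, a₁, a₂, a₃, a₄ ∈ ℝ with a₄ ≠ 0, and let λ₁, λ₂, λ₃, λ₄ ∈ ℝ be pairwise distinct with a₀ + a₁·λⱼ + a₂·λⱼ² + a₃·λⱼ³ + a₄·λⱼ⁴ = 0 for each j. Set bⱼ = (−λⱼ, 1) ∈ ℝ × ℝ. Then for every function u : ℝ × ℝ → ℝ of class C⁴ (ContDiff ℝ 4) and every x ∈ ℝ × ℝ, a₀·∂⁴u/∂x₁⁴(x) + a₁·∂⁴u/∂x₁³∂x₂(x) + a₂·∂⁴u/∂x₁²∂x₂²(x) + a₃·∂⁴u/∂x₁∂x₂³(x) + a₄·∂⁴u/∂x₂⁴(x) = a₄ · (D_{b₁}(D_{b₂}(D_{b₃}(D_{b₄} u))))(x), where the fourth-order partial derivatives are given by the fourth iterated Fréchet derivative of u evaluated at the corresponding coordinate directions. -/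
/-!
Both sides are values of the 4-linear map `D⁴u(x)`: iterating the Fréchet derivative gives
`D_{b₁} D_{b₂} D_{b₃} D_{b₄} u (x) = D⁴u(x) (b₁, b₂, b₃, b₄)`, and `D⁴u(x)` is symmetric because
second derivatives of `C²` maps are. Expanding `bⱼ = -λⱼ e₁ + e₂` multilinearly, the terms with
`k` copies of `e₂` add up to the coefficient of `Xᵏ` in `∏ⱼ (X - λⱼ)` times the corresponding
fourth partial derivative. The quartic `a₀ + a₁ X + ⋯ + a₄ X⁴` vanishes at the four distinct `λⱼ`,
so it equals `a₄ ∏ⱼ (X - λⱼ)`, and `a₄` times that coefficient is `aₖ`.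
-/

noncomputable def dirDeriv (a : ℝ × ℝ) (u : ℝ × ℝ → ℝ) : ℝ × ℝ → ℝ :=
  fun x => fderiv ℝ u x a

open Equiv Finset Polynomial

namespace MultilinearMap

variable {R M N : Type*} [CommSemiring R] [AddCommMonoid M] [Module R M] [AddCommMonoid N]
  [Module R N]

theorem map_piecewise_eq_of_card_eq {ι : Type*} [DecidableEq ι]
    (f : MultilinearMap R (fun _ : ι => M) N) (hf : ∀ (v : ι → M) (σ : Perm ι), f (v ∘ σ) = f v)
    (a b : M) {s t : Finset ι} (hst : #s = #t) :
    f (s.piecewise (fun _ => a) fun _ => b) = f (t.piecewise (fun _ => a) fun _ => b) := by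
  obtain ⟨σ, rfl⟩ := Perm.exists_map_finset_eq s t hst
  conv_rhs => rw [← hf _ σ]
  congr 1
  ext i
  simp [Finset.piecewise]

theorem map_smul_add_eq_sum_coeff {n : ℕ} (f : MultilinearMap R (fun _ : Fin n => M) N)
    (hf : ∀ (v : Fin n → M) (σ : Perm (Fin n)), f (v ∘ σ) = f v) (p : Fin n → R) (a b : M) :
    f (fun i => p i • a + b)
      = ∑ j ∈ Finset.range (n + 1),
          (∏ i, (X + C (p i))).coeff (n - j) • f (fun i => if (i : ℕ) < j then a else b) := by
  have hcard : ∀ s : Finset (Fin n),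
      f (s.piecewise (fun _ => a) fun _ => b) = f (fun i => if (i : ℕ) < #s then a else b) := by
    intro s
    have hs : #{i : Fin n | (i : ℕ) < #s} = #s := by
      rw [Fin.card_filter_val_lt, min_eq_right ((card_le_univ s).trans_eq (Fintype.card_fin n))]
    rw [f.map_piecewise_eq_of_card_eq hf a b hs.symm]
    congr 1
    ext i
    simp [Finset.piecewise]
  calc f (fun i => p i • a + b)
      = ∑ s : Finset (Fin n), f (s.piecewise (fun i => p i • a) fun _ => b) :=
        f.map_add_univ (fun i => p i • a) fun _ => b
    _ = ∑ s : Finset (Fin n), (∏ i ∈ s, p i) • f (fun i => if (i : ℕ) < #s then a else b) := by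
        refine sum_congr rfl fun s _ => ?_
        rw [← hcard, ← f.map_piecewise_smul]
        congr 1
        ext i
        by_cases hi : i ∈ s <;> simp [hi]
    _ = ∑ j ∈ Finset.range (n + 1), ∑ s ∈ powersetCard j univ,
          (∏ i ∈ s, p i) • f (fun i => if (i : ℕ) < j then a else b) := by
        rw [← sum_fiberwise_of_maps_to (g := card) (t := Finset.range (n + 1))
          fun s _ => mem_range_succ_iff.2 ((card_le_univ s).trans_eq (Fintype.card_fin n))]
        refine sum_congr rfl fun j _ => sum_congr (by ext; simp) fun s hs => ?_
        rw [(mem_powersetCard.1 hs).2]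
    _ = _ := by
        refine sum_congr rfl fun j hj => ?_
        rw [Finset.prod_X_add_C_coeff _ _ (by simp), ← sum_smul, card_univ, Fintype.card_fin,
          Nat.sub_sub_self (mem_range_succ_iff.1 hj)]

end MultilinearMap

theorem Polynomial.eq_C_coeff_mul_prod_X_sub_C {R ι : Type*} [CommRing R] [IsDomain R]
    [Fintype ι] {p : R[X]} {l : ι → R} (hl : Function.Injective l)
    (hdeg : p.natDegree ≤ Fintype.card ι) (hroot : ∀ i, p.IsRoot (l i)) :
    p = C (p.coeff (Fintype.card ι)) * ∏ i, (X - C (l i)) := by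
  classical
  rw [← Lagrange.nodal_eq]
  have hq : (Lagrange.nodal univ l).natDegree = Fintype.card ι := by
    rw [Lagrange.natDegree_nodal, card_univ]
  refine eq_of_degree_sub_lt_of_eval_finset_eq (univ.image l) ?_ ?_
  · rw [card_image_of_injective _ hl, card_univ, degree_lt_iff_coeff_zero]
    intro m hm
    rcases hm.lt_or_eq with hm | rfl
    · rw [coeff_sub, coeff_C_mul, coeff_eq_zero_of_natDegree_lt (hdeg.trans_lt hm),
        coeff_eq_zero_of_natDegree_lt (hq.trans_lt hm), mul_zero, sub_zero]
    · rw [coeff_sub, coeff_C_mul, ← hq, Lagrange.nodal_monic.coeff_natDegree, mul_one, hq,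
        sub_self]
  · simp only [mem_image, mem_univ, true_and, forall_exists_index, forall_apply_eq_imp_iff]
    intro i
    rw [(hroot i).eq_zero, eval_mul, Lagrange.eval_nodal_at_node (mem_univ i), mul_zero]

theorem Polynomial.quartic_eq_C_mul_prod_X_sub_C {R : Type*} [CommRing R] [IsDomain R]
    {a0 a1 a2 a3 a4 : R} {l : Fin 4 → R} (hl : Function.Injective l)
    (hroot : ∀ i, a0 + a1 * l i + a2 * l i ^ 2 + a3 * l i ^ 3 + a4 * l i ^ 4 = 0) :
    C a4 * X ^ 4 + C a3 * X ^ 3 + C a2 * X ^ 2 + C a1 * X + C a0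
      = C a4 * ∏ i, (X - C (l i)) := by
  refine (eq_C_coeff_mul_prod_X_sub_C hl ?_ fun i => ?_).trans (by simp)
  · rw [Fintype.card_fin]
    compute_degree
  · simp only [IsRoot.def, eval_add, eval_mul, eval_C, eval_pow, eval_X]
    linear_combination hroot i

section IteratedFDerivSymmetry

variable {𝕜 : Type*} [RCLike 𝕜] {E F : Type*} [NormedAddCommGroup E] [NormedSpace 𝕜 E]
  [NormedAddCommGroup F] [NormedSpace 𝕜 F] {f : E → F}

theorem ContDiff.fderiv_iteratedFDeriv_apply {n : WithTop ℕ∞} {k : ℕ} (hf : ContDiff 𝕜 n f)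
    (hk : k < n) (x : E) (m : Fin k → E) (v : E) :
    fderiv 𝕜 (fun y => iteratedFDeriv 𝕜 k f y m) x v
      = iteratedFDeriv 𝕜 (k + 1) f x (Fin.cons v m) := by
  rw [fderiv_continuousMultilinear_apply_const_apply (hf.differentiable_iteratedFDeriv hk x),
    iteratedFDeriv_succ_apply_left, Fin.tail_cons, Fin.cons_zero]

theorem ContDiff.iteratedFDeriv_cons_cons_comm {k : ℕ} (hf : ContDiff 𝕜 (k + 2) f)
    (x a b : E) (m : Fin k → E) :
    iteratedFDeriv 𝕜 (k + 2) f x (Fin.cons a (Fin.cons b m))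
      = iteratedFDeriv 𝕜 (k + 2) f x (Fin.cons b (Fin.cons a m)) := by
  set g : E → F := fun y => iteratedFDeriv 𝕜 k f y m
  have hg : ContDiff 𝕜 2 g :=
    (ContinuousMultilinearMap.apply 𝕜 (fun _ : Fin k => E) F m).contDiff.comp
      (hf.iteratedFDeriv_right (add_comm _ _).le)
  have hsnd : ∀ v w, iteratedFDeriv 𝕜 (k + 2) f x (Fin.cons v (Fin.cons w m))
      = fderiv 𝕜 (fderiv 𝕜 g) x v w := by
    intro v w
    have hfg : (fun y => iteratedFDeriv 𝕜 (k + 1) f y (Fin.cons w m))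
        = fun y => fderiv 𝕜 g y w :=
      funext fun y => (hf.fderiv_iteratedFDeriv_apply (by norm_cast; omega) y m w).symm
    rw [← hf.fderiv_iteratedFDeriv_apply (by norm_cast; omega) x, hfg,
      fderiv_clm_apply ((hg.fderiv_right one_add_one_eq_two.le).differentiable one_ne_zero x)
        (differentiableAt_const w)]
    simp
  rw [hsnd, hsnd, hg.contDiffAt.isSymmSndFDerivAt (by simp)]

theorem ContDiff.iteratedFDeriv_comp_swap {k : ℕ} (hf : ContDiff 𝕜 (k + 1) f) (i : Fin k)
    (x : E) (v : Fin (k + 1) → E) :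
    iteratedFDeriv 𝕜 (k + 1) f x (v ∘ swap i.castSucc i.succ)
      = iteratedFDeriv 𝕜 (k + 1) f x v := by
  induction k generalizing x with
  | zero => exact i.elim0
  | succ k ih =>
    cases i using Fin.cases with
    | zero =>
      have hswap : v ∘ swap 0 1 = Fin.cons (v 1) (Fin.cons (v 0) (Fin.tail (Fin.tail v))) := by
        ext j
        refine Fin.cases ?_ (Fin.cases ?_ fun j => ?_) j
        · simp
        · simp
        · simp [swap_apply_of_ne_of_ne (Fin.succ_ne_zero _) (Fin.succ_succ_ne_one _), Fin.tail]
      have hv : v = Fin.cons (v 0) (Fin.cons (v 1) (Fin.tail (Fin.tail v))) :=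
        (Fin.cons_self_tail v).symm.trans (congrArg _ (Fin.cons_self_tail _).symm)
      rw [Fin.castSucc_zero, Fin.succ_zero_eq_one, hswap, hf.iteratedFDeriv_cons_cons_comm, ← hv]
    | succ j =>
      have hswap : v ∘ swap j.succ.castSucc j.succ.succ
          = Fin.cons (v 0) (Fin.tail v ∘ swap j.castSucc j.succ) := by
        ext l
        refine Fin.cases ?_ (fun l => ?_) l
        · simp [swap_apply_of_ne_of_ne (Fin.succ_ne_zero _).symm (Fin.succ_ne_zero _).symm]
        · simp [(Fin.succ_injective _).swap_apply, Fin.tail]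
      have hf' : ContDiff 𝕜 (k + 1) f := hf.of_le (by norm_cast; omega)
      rw [hswap, ← hf.fderiv_iteratedFDeriv_apply (by norm_cast; omega),
        funext (ih hf' j · (Fin.tail v)), hf.fderiv_iteratedFDeriv_apply (by norm_cast; omega),
        Fin.cons_self_tail]

/- Unlike `ContDiffAt.iteratedFDeriv_comp_perm`, this assumes only `Cⁿ`, not analyticity. -/
theorem ContDiff.iteratedFDeriv_comp_perm {n : ℕ} (hf : ContDiff 𝕜 n f) (x : E)
    (v : Fin n → E) (σ : Perm (Fin n)) :
    iteratedFDeriv 𝕜 n f x (v ∘ σ) = iteratedFDeriv 𝕜 n f x v := by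
  cases n with
  | zero => exact congrArg _ (Subsingleton.elim _ _)
  | succ k =>
    have hσ : σ ∈ Submonoid.closure (Set.range fun i : Fin k ↦ swap i.castSucc i.succ) := by
      rw [Perm.mclosure_swap_castSucc_succ]
      trivial
    induction hσ using Submonoid.closure_induction generalizing v with
    | mem τ hτ =>
      obtain ⟨i, rfl⟩ := hτ
      exact hf.iteratedFDeriv_comp_swap i x v
    | one => rfl
    | mul τ ρ _ _ hτ hρ => rw [Perm.coe_mul, ← Function.comp_assoc, hρ, hτ]

theorem ContDiff.iteratedFDeriv_smul_add_eq_sum_coeff {n : ℕ} (hf : ContDiff 𝕜 n f) (x : E)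
    (p : Fin n → 𝕜) (a b : E) :
    iteratedFDeriv 𝕜 n f x (fun i => p i • a + b)
      = ∑ j ∈ Finset.range (n + 1), (∏ i, (X + C (p i))).coeff (n - j)
          • iteratedFDeriv 𝕜 n f x (fun i => if (i : ℕ) < j then a else b) :=
  (iteratedFDeriv 𝕜 n f x).toMultilinearMap.map_smul_add_eq_sum_coeff
    (hf.iteratedFDeriv_comp_perm x) p a b

end IteratedFDerivSymmetry

theorem dirDeriv_iteratedFDeriv_apply {u : ℝ × ℝ → ℝ} {k : ℕ} (hu : ContDiff ℝ (k + 1) u)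
    (m : Fin k → ℝ × ℝ) (v : ℝ × ℝ) :
    dirDeriv v (fun y => iteratedFDeriv ℝ k u y m)
      = fun x => iteratedFDeriv ℝ (k + 1) u x (Fin.cons v m) :=
  funext fun x => hu.fderiv_iteratedFDeriv_apply (by norm_cast; omega) x m v

theorem ContDiff.dirDeriv_four_eq_iteratedFDeriv {u : ℝ × ℝ → ℝ} (hu : ContDiff ℝ 4 u)
    (v₁ v₂ v₃ v₄ x : ℝ × ℝ) :
    dirDeriv v₁ (dirDeriv v₂ (dirDeriv v₃ (dirDeriv v₄ u))) x
      = iteratedFDeriv ℝ 4 u x ![v₁, v₂, v₃, v₄] := by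
  have hu0 : u = fun y => iteratedFDeriv ℝ 0 u y ![] := by simp
  rw [hu0, dirDeriv_iteratedFDeriv_apply (hu.of_le (by norm_num)),
    dirDeriv_iteratedFDeriv_apply (hu.of_le (by norm_num)),
    dirDeriv_iteratedFDeriv_apply (hu.of_le (by norm_num)), dirDeriv_iteratedFDeriv_apply hu]
  rfl

theorem operator_factorization_general
    (a0 a1 a2 a3 a4 : ℝ)
    (l1 l2 l3 l4 : ℝ)
    (h12 : l1 ≠ l2) (h13 : l1 ≠ l3) (h14 : l1 ≠ l4)
    (h23 : l2 ≠ l3) (h24 : l2 ≠ l4) (h34 : l3 ≠ l4)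
    (hr1 : a0 + a1 * l1 + a2 * l1 ^ 2 + a3 * l1 ^ 3 + a4 * l1 ^ 4 = 0)
    (hr2 : a0 + a1 * l2 + a2 * l2 ^ 2 + a3 * l2 ^ 3 + a4 * l2 ^ 4 = 0)
    (hr3 : a0 + a1 * l3 + a2 * l3 ^ 2 + a3 * l3 ^ 3 + a4 * l3 ^ 4 = 0)
    (hr4 : a0 + a1 * l4 + a2 * l4 ^ 2 + a3 * l4 ^ 3 + a4 * l4 ^ 4 = 0)
    (u : ℝ × ℝ → ℝ) (hu : ContDiff ℝ 4 u) (x : ℝ × ℝ) :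
    a0 * iteratedFDeriv ℝ 4 u x ![((1:ℝ),(0:ℝ)), (1,0), (1,0), (1,0)]
      + a1 * iteratedFDeriv ℝ 4 u x ![((1:ℝ),(0:ℝ)), (1,0), (1,0), (0,1)]
      + a2 * iteratedFDeriv ℝ 4 u x ![((1:ℝ),(0:ℝ)), (1,0), (0,1), (0,1)]
      + a3 * iteratedFDeriv ℝ 4 u x ![((1:ℝ),(0:ℝ)), (0,1), (0,1), (0,1)]
      + a4 * iteratedFDeriv ℝ 4 u x ![((0:ℝ),(1:ℝ)), (0,1), (0,1), (0,1)]
    = a4 * dirDeriv (-l1, 1) (dirDeriv (-l2, 1) (dirDeriv (-l3, 1)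
        (dirDeriv (-l4, 1) u))) x := by
  set l : Fin 4 → ℝ := ![l1, l2, l3, l4]
  have hl : Function.Injective l := by
    intro i j
    fin_cases i <;> fin_cases j <;> simp [l, h12, h13, h14, h23, h24, h34, h12.symm, h13.symm,
      h14.symm, h23.symm, h24.symm, h34.symm]
  have hP := quartic_eq_C_mul_prod_X_sub_C (a0 := a0) (a1 := a1) (a2 := a2) (a3 := a3)
    (a4 := a4) hl (by simp [Fin.forall_fin_succ, l, hr1, hr2, hr3, hr4])
  have hb : ![((-l1, 1) : ℝ × ℝ), (-l2, 1), (-l3, 1), (-l4, 1)]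
      = fun i => (-l i) • ((1 : ℝ), (0 : ℝ)) + ((0 : ℝ), (1 : ℝ)) := by
    ext i : 1
    fin_cases i <;> simp [l]
  have hF : ∀ j : ℕ, (fun i : Fin 4 => if (i : ℕ) < j then ((1 : ℝ), (0 : ℝ)) else (0, 1))
      = ![if 0 < j then (1, 0) else (0, 1), if 1 < j then (1, 0) else (0, 1),
          if 2 < j then (1, 0) else (0, 1), if 3 < j then (1, 0) else (0, 1)] := fun j => by
    ext i : 1
    fin_cases i <;> rfl
  have hneg : ∏ i, (X + C (-l i)) = ∏ i, (X - C (l i)) := by simp [sub_eq_add_neg]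
  rw [hu.dirDeriv_four_eq_iteratedFDeriv, hb, hu.iteratedFDeriv_smul_add_eq_sum_coeff, hneg,
    mul_sum]
  simp_rw [smul_eq_mul, ← mul_assoc, ← coeff_C_mul, ← hP]
  rw [← sum_range_reflect]
  simp [sum_range_succ, coeff_X, hF]

/-- **Factorization of the fourth-order hyperbolic operator into first-order
directional derivative operators.**  If the characteristic polynomial
`a₀ + a₁λ + a₂λ² + a₃λ³ + a₄λ⁴` has pairwise distinct real roots `λⱼ`
(and `a₄ ≠ 0`), set `bⱼ = (−λⱼ, 1)`.  Then for every `C⁴` function `u` on the plane,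
`L(∂)u = a₄ · D_{b₁} D_{b₂} D_{b₃} D_{b₄} u`, where the fourth-order partial
derivatives of `u` are given by the fourth iterated Fréchet derivative
evaluated at the coordinate directions `(1,0)` and `(0,1)`. -/
theorem operator_factorization
    (a0 a1 a2 a3 a4 : ℝ) (ha4 : a4 ≠ 0)
    (l1 l2 l3 l4 : ℝ)
    (h12 : l1 ≠ l2) (h13 : l1 ≠ l3) (h14 : l1 ≠ l4)
    (h23 : l2 ≠ l3) (h24 : l2 ≠ l4) (h34 : l3 ≠ l4)
    (hr1 : a0 + a1 * l1 + a2 * l1 ^ 2 + a3 * l1 ^ 3 + a4 * l1 ^ 4 = 0)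
    (hr2 : a0 + a1 * l2 + a2 * l2 ^ 2 + a3 * l2 ^ 3 + a4 * l2 ^ 4 = 0)
    (hr3 : a0 + a1 * l3 + a2 * l3 ^ 2 + a3 * l3 ^ 3 + a4 * l3 ^ 4 = 0)
    (hr4 : a0 + a1 * l4 + a2 * l4 ^ 2 + a3 * l4 ^ 3 + a4 * l4 ^ 4 = 0)
    (u : ℝ × ℝ → ℝ) (hu : ContDiff ℝ 4 u) (x : ℝ × ℝ) :
    a0 * iteratedFDeriv ℝ 4 u x ![((1:ℝ),(0:ℝ)), (1,0), (1,0), (1,0)]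
      + a1 * iteratedFDeriv ℝ 4 u x ![((1:ℝ),(0:ℝ)), (1,0), (1,0), (0,1)]
      + a2 * iteratedFDeriv ℝ 4 u x ![((1:ℝ),(0:ℝ)), (1,0), (0,1), (0,1)]
      + a3 * iteratedFDeriv ℝ 4 u x ![((1:ℝ),(0:ℝ)), (0,1), (0,1), (0,1)]
      + a4 * iteratedFDeriv ℝ 4 u x ![((0:ℝ),(1:ℝ)), (0,1), (0,1), (0,1)]
    = a4 * dirDeriv (-l1, 1) (dirDeriv (-l2, 1) (dirDeriv (-l3, 1)
        (dirDeriv (-l4, 1) u))) x :=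
  operator_factorization_general a0 a1 a2 a3 a4 l1 l2 l3 l4 h12 h13 h14 h23 h24 h34 hr1 hr2 hr3 hr4
    u hu x
end

section
/- Let a¹, a², a³, a⁴ ∈ ℝ × ℝ and b¹, b², b³, b⁴ ∈ ℝ × ℝ satisfy bʲ·aʲ = 0 for each j = 1, 2, 3, 4. Let C₁, C₂, C₃, C₄ ∈ ℝ and let q ≥ 3 be an integer. Define u : ℝ × ℝ → ℝ by u(x) = Σ_{j=1}^{4} Cⱼ·( (1/(2q))·eval (bʲ·x) (Polynomial.Chebyshev.T ℝ q) − (1/(2(q−2)))·eval (bʲ·x) (Polynomial.Chebyshev.T ℝ (q−2)) ). Then D_{a¹}(D_{a²}(D_{a³}(D_{a⁴} u)))(x) = 0 for every x ∈ ℝ × ℝ, i.e., u solves the homogeneous fourth-order equation whose operator is the composition of the four directional derivatives along a¹, a², a³, a⁴. -/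
/-!
Every summand of `u` is a ridge function `x ↦ P (bʲ · x)` with `P` a polynomial. Differentiating a
ridge function along `a` gives the ridge function of `(bʲ · a) • P'` in the same direction `bʲ`, so
the four directional derivatives multiply the `j`-th summand by `∏ᵢ bʲ · aⁱ`, which contains the
vanishing factor `bʲ · aʲ`.
-/

open Polynomial

def dot (a b : ℝ × ℝ) : ℝ := a.1 * b.1 + a.2 * b.2

noncomputable def dotCLM (b : ℝ × ℝ) : (ℝ × ℝ) →L[ℝ] ℝ :=
  b.1 • ContinuousLinearMap.fst ℝ ℝ ℝ + b.2 • ContinuousLinearMap.snd ℝ ℝ ℝ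

@[simp]
lemma dotCLM_apply (b x : ℝ × ℝ) : dotCLM b x = dot b x := by
  simp [dotCLM, dot]

lemma hasFDerivAt_eval_dot (b : ℝ × ℝ) (P : ℝ[X]) (x : ℝ × ℝ) :
    HasFDerivAt (fun y => P.eval (dot b y)) ((derivative P).eval (dot b x) • dotCLM b) x := by
  have hdot : HasFDerivAt (fun y => dot b y) (dotCLM b) x :=
    (dotCLM b).hasFDerivAt.congr_of_eventuallyEq (.of_forall fun y => (dotCLM_apply b y).symm)
  exact (P.hasDerivAt (dot b x)).comp_hasFDerivAt x hdot

lemma dirDeriv_sum_eval_dot {ι : Type*} (s : Finset ι) (b : ι → ℝ × ℝ) (P : ι → ℝ[X])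
    (a : ℝ × ℝ) :
    dirDeriv a (fun x => ∑ j ∈ s, (P j).eval (dot (b j) x)) =
      fun x => ∑ j ∈ s, (dot (b j) a • derivative (P j)).eval (dot (b j) x) := by
  funext x
  have hsum := HasFDerivAt.fun_sum (u := s) fun j _ => hasFDerivAt_eval_dot (b j) (P j) x
  simp only [dirDeriv, hsum.fderiv, FunLike.coe_sum, Finset.sum_apply,
    smul_apply, dotCLM_apply, eval_smul, smul_eq_mul]
  exact Finset.sum_congr rfl fun j _ => mul_comm _ _

noncomputable def chebyshevProfile (q : ℤ) : ℝ[X] :=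
  C (1 / (2 * (q : ℝ))) * Chebyshev.T ℝ q - C (1 / (2 * ((q : ℝ) - 2))) * Chebyshev.T ℝ (q - 2)

theorem chebyshev_combination_solves_homogeneous_equation_general
    (a1 a2 a3 a4 b1 b2 b3 b4 : ℝ × ℝ)
    (h1 : dot b1 a1 = 0) (h2 : dot b2 a2 = 0)
    (h3 : dot b3 a3 = 0) (h4 : dot b4 a4 = 0)
    (C1 C2 C3 C4 : ℝ) (q : ℤ)
    (u : ℝ × ℝ → ℝ)
    (hu : u = fun x : ℝ × ℝ =>
      C1 * ((1 / (2 * (q : ℝ))) * eval (dot b1 x) (Polynomial.Chebyshev.T ℝ q)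
        - (1 / (2 * ((q : ℝ) - 2))) * eval (dot b1 x) (Polynomial.Chebyshev.T ℝ (q - 2)))
      + C2 * ((1 / (2 * (q : ℝ))) * eval (dot b2 x) (Polynomial.Chebyshev.T ℝ q)
        - (1 / (2 * ((q : ℝ) - 2))) * eval (dot b2 x) (Polynomial.Chebyshev.T ℝ (q - 2)))
      + C3 * ((1 / (2 * (q : ℝ))) * eval (dot b3 x) (Polynomial.Chebyshev.T ℝ q)
        - (1 / (2 * ((q : ℝ) - 2))) * eval (dot b3 x) (Polynomial.Chebyshev.T ℝ (q - 2)))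
      + C4 * ((1 / (2 * (q : ℝ))) * eval (dot b4 x) (Polynomial.Chebyshev.T ℝ q)
        - (1 / (2 * ((q : ℝ) - 2))) * eval (dot b4 x) (Polynomial.Chebyshev.T ℝ (q - 2)))) :
    ∀ x : ℝ × ℝ, dirDeriv a1 (dirDeriv a2 (dirDeriv a3 (dirDeriv a4 u))) x = 0 := by
  have hu_ridge : u = fun x => ∑ j : Fin 4,
      (![C1, C2, C3, C4] j • chebyshevProfile q).eval (dot (![b1, b2, b3, b4] j) x) := by
    subst hu
    funext x
    simp [Fin.sum_univ_four, chebyshevProfile, eval_sub, eval_mul]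
  intro x
  rw [hu_ridge]
  simp only [dirDeriv_sum_eval_dot]
  simp [Fin.sum_univ_four, h1, h2, h3, h4]

/-- **The Chebyshev combinations of formula (31) solve the homogeneous equation.**
Let `a¹, …, a⁴` and `b¹, …, b⁴` satisfy `bʲ · aʲ = 0`, let `C₁, …, C₄ ∈ ℝ` and
`q ≥ 3` an integer.  Then
`u(x) = Σⱼ Cⱼ ( T_q(bʲ·x)/(2q) − T_{q−2}(bʲ·x)/(2(q−2)) )`
is annihilated by the composition of the directional derivatives along
`a¹, a², a³, a⁴`. -/
theorem chebyshev_combination_solves_homogeneous_equation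
    (a1 a2 a3 a4 b1 b2 b3 b4 : ℝ × ℝ)
    (h1 : dot b1 a1 = 0) (h2 : dot b2 a2 = 0)
    (h3 : dot b3 a3 = 0) (h4 : dot b4 a4 = 0)
    (C1 C2 C3 C4 : ℝ) (q : ℤ) (hq : 3 ≤ q)
    (u : ℝ × ℝ → ℝ)
    (hu : u = fun x : ℝ × ℝ =>
      C1 * ((1 / (2 * (q : ℝ))) * eval (dot b1 x) (Polynomial.Chebyshev.T ℝ q)
        - (1 / (2 * ((q : ℝ) - 2))) * eval (dot b1 x) (Polynomial.Chebyshev.T ℝ (q - 2)))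
      + C2 * ((1 / (2 * (q : ℝ))) * eval (dot b2 x) (Polynomial.Chebyshev.T ℝ q)
        - (1 / (2 * ((q : ℝ) - 2))) * eval (dot b2 x) (Polynomial.Chebyshev.T ℝ (q - 2)))
      + C3 * ((1 / (2 * (q : ℝ))) * eval (dot b3 x) (Polynomial.Chebyshev.T ℝ q)
        - (1 / (2 * ((q : ℝ) - 2))) * eval (dot b3 x) (Polynomial.Chebyshev.T ℝ (q - 2)))
      + C4 * ((1 / (2 * (q : ℝ))) * eval (dot b4 x) (Polynomial.Chebyshev.T ℝ q)
        - (1 / (2 * ((q : ℝ) - 2))) * eval (dot b4 x) (Polynomial.Chebyshev.T ℝ (q - 2)))) :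
    ∀ x : ℝ × ℝ, dirDeriv a1 (dirDeriv a2 (dirDeriv a3 (dirDeriv a4 u))) x = 0 :=
  chebyshev_combination_solves_homogeneous_equation_general a1 a2 a3 a4 b1 b2 b3 b4 h1 h2 h3 h4 C1
    C2 C3 C4 q u hu
end

section
/- Let φ₁, φ₂, φ₃, φ₄ ∈ ℝ, define T_j : ℝ → ℝ by T_j(τ) = 2φ_j − τ, and let T = T₄ ∘ T₃ ∘ T₂ ∘ T₁ be the John mapping. Then the following are equivalent: (i) there exists a positive integer n such that for every τ ∈ ℝ there is an integer m with T^[n](τ) = τ + 2π·m (i.e., every point of the characteristic billiard on the unit circle is periodic); (ii) there exist integers p and q with q ≠ 0 such that φ₄ − φ₃ + φ₂ − φ₁ = π·p/q. -/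
/-! Two point reflections compose to a translation, so `T` is the translation by
`2 (φ₄ - φ₃ + φ₂ - φ₁)` and `T^[n]` is the identity modulo `2π` exactly when `n` times this
shift is an integer multiple of `2π`. -/

open Real

theorem reflect_comp_reflect {R : Type*} [CommRing R] (a b : R) :
    (fun τ : R => 2 * b - τ) ∘ (fun τ => 2 * a - τ) = (· + 2 * (b - a)) := by
  funext τ
  simp only [Function.comp_apply]
  ring

theorem exists_nat_mul_eq_int_mul_iff {K : Type*} [Field K] [CharZero K] (c δ : K) :
    (∃ n : ℕ, 0 < n ∧ ∃ m : ℤ, n * δ = m * c) ↔ ∃ p q : ℤ, q ≠ 0 ∧ δ = c * p / q := by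
  constructor
  · rintro ⟨n, hn, m, hnm⟩
    refine ⟨m, n, by exact_mod_cast hn.ne', ?_⟩
    rw [eq_div_iff (by exact_mod_cast hn.ne'), mul_comm δ, Int.cast_natCast, hnm, mul_comm]
  · rintro ⟨p, q, hq, rfl⟩
    obtain ⟨n, rfl | rfl⟩ := Int.eq_nat_or_neg q
    · have hn : (n : K) ≠ 0 := by exact_mod_cast hq
      refine ⟨n, by omega, p, ?_⟩
      push_cast
      field_simp
    · have hn : (n : K) ≠ 0 := by exact_mod_cast neg_ne_zero.mp hq
      refine ⟨n, by omega, -p, ?_⟩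
      push_cast
      field_simp

/-- **Periodicity of the characteristic billiard ⇔ rationality condition (30).**
With the reflections `Tⱼ(τ) = 2φⱼ − τ` and the John mapping `T = T₄ ∘ T₃ ∘ T₂ ∘ T₁`,
every point of the characteristic billiard on the unit circle is periodic (i.e. some
positive iterate of `T` is the identity modulo `2π`) if and only if
`φ₄ − φ₃ + φ₂ − φ₁ = π·p/q` for some integers `p, q` with `q ≠ 0`. -/
theorem john_mapping_periodicity_iff_rational (φ1 φ2 φ3 φ4 : ℝ)
    (T1 T2 T3 T4 T : ℝ → ℝ)
    (hT1 : T1 = fun τ => 2 * φ1 - τ) (hT2 : T2 = fun τ => 2 * φ2 - τ)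
    (hT3 : T3 = fun τ => 2 * φ3 - τ) (hT4 : T4 = fun τ => 2 * φ4 - τ)
    (hT : T = T4 ∘ T3 ∘ T2 ∘ T1) :
    (∃ n : ℕ, 0 < n ∧ ∀ τ : ℝ, ∃ m : ℤ, T^[n] τ = τ + 2 * π * m) ↔
      (∃ p q : ℤ, q ≠ 0 ∧ φ4 - φ3 + φ2 - φ1 = π * p / q) := by
  have hT_translation : T = (· + 2 * (φ4 - φ3 + φ2 - φ1)) := by
    rw [hT, ← Function.comp_assoc, hT1, hT2, hT3, hT4, reflect_comp_reflect,
      reflect_comp_reflect]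
    funext τ
    simp only [Function.comp_apply]
    ring
  rw [← exists_nat_mul_eq_int_mul_iff, hT_translation]
  refine exists_congr fun n => and_congr_right fun _ => ?_
  simp only [add_right_iterate, nsmul_eq_mul, add_right_inj]
  constructor
  · intro h
    obtain ⟨m, hm⟩ := h 0
    exact ⟨m, by linarith⟩
  · rintro ⟨m, hm⟩ _
    exact ⟨m, by linarith⟩
end

section
/- Let φ₁, φ₂, φ₃, φ₄ ∈ ℝ, define T_j : ℝ → ℝ by T_j(τ) = 2φ_j − τ, and let T = T₄ ∘ T₃ ∘ T₂ ∘ T₁ be the John mapping. Suppose there exist integers p₁, p₂ and a positive integer q such that φ₂ − φ₁ = π·p₁/q and φ₄ − φ₃ = π·p₂/q. Then for every τ ∈ ℝ, the q-fold iterate satisfies T^[q](τ) = τ + 2π·(p₁ + p₂); in particular every point of the characteristic billiard on the unit circle is periodic (T^[q](τ) ≡ τ modulo 2π). -/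
/-! Two point reflections `τ ↦ 2a − τ`, `τ ↦ 2b − τ` compose to the translation by `2(b − a)`,
so the John mapping is the translation by `2(φ₂ − φ₁) + 2(φ₄ − φ₃) = 2π(p₁ + p₂)/q`,
and its `q`-th iterate is the translation by `2π(p₁ + p₂)`. -/

open Real

theorem reflection_comp_reflection {R : Type*} [Ring R] (a b : R) :
    (fun τ => 2 * b - τ) ∘ (fun τ => 2 * a - τ) = (· + 2 * (b - a)) := by
  funext τ
  simp only [Function.comp_apply]
  noncomm_ring

theorem iterate_add_div_self {K : Type*} [Field K] [CharZero K] (c : K) {q : ℕ}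
    (hq : q ≠ 0) (τ : K) : (· + c / q)^[q] τ = τ + c := by
  rw [add_right_iterate_apply, nsmul_eq_mul, mul_div_cancel₀ c (Nat.cast_ne_zero.mpr hq)]

/-- **Condition (30) forces periodicity of the characteristic billiard.**
With the reflections `Tⱼ(τ) = 2φⱼ − τ` and the John mapping `T = T₄ ∘ T₃ ∘ T₂ ∘ T₁`,
if `φ₂ − φ₁ = π·p₁/q` and `φ₄ − φ₃ = π·p₂/q` for integers `p₁, p₂` and a positive
integer `q`, then `T^[q](τ) = τ + 2π(p₁ + p₂)` for all `τ`; in particular every point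
of the characteristic billiard on the unit circle is periodic. -/
theorem john_mapping_periodic_of_rational (φ1 φ2 φ3 φ4 : ℝ)
    (T1 T2 T3 T4 T : ℝ → ℝ)
    (hT1 : T1 = fun τ => 2 * φ1 - τ) (hT2 : T2 = fun τ => 2 * φ2 - τ)
    (hT3 : T3 = fun τ => 2 * φ3 - τ) (hT4 : T4 = fun τ => 2 * φ4 - τ)
    (hT : T = T4 ∘ T3 ∘ T2 ∘ T1)
    (p1 p2 : ℤ) (q : ℕ) (hq : 0 < q)
    (h21 : φ2 - φ1 = π * p1 / q) (h43 : φ4 - φ3 = π * p2 / q) :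
    ∀ τ : ℝ, T^[q] τ = τ + 2 * π * (p1 + p2) := by
  have h_translation : T = (· + 2 * π * (p1 + p2) / q) := by
    rw [hT, ← Function.comp_assoc, hT1, hT2, hT3, hT4, reflection_comp_reflection,
      reflection_comp_reflection, h21, h43]
    funext τ
    simp only [Function.comp_apply]
    ring
  intro τ
  rw [h_translation, iterate_add_div_self _ hq.ne']
end

section
/- Let b ∈ ℝ × ℝ with b ≠ 0. For each integer q ≥ 3 define u_q : ℝ × ℝ → ℝ by u_q(x) = (1/(2q))·eval (b·x) (Polynomial.Chebyshev.T ℝ q) − (1/(2(q−2)))·eval (b·x) (Polynomial.Chebyshev.T ℝ (q−2)). Then the family (u_q)_{q ≥ 3} is linearly independent over ℝ in the real vector space of functions ℝ × ℝ → ℝ. -/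
open Polynomial

/-!
Each `u_q` is `p_q (b·x)` for the polynomial `p_q = T_q/(2q) − T_{q−2}/(2(q−2))`, which has degree
exactly `q` because `T_n` has degree `n`. Polynomials of pairwise distinct degrees are linearly
independent, and since `b ≠ 0` the form `x ↦ b·x` is onto `ℝ`, so composing with it is an injective
linear map on `ℝ[X]` and preserves linear independence.
-/

open Function in
theorem Polynomial.linearIndependent_of_injective_degree {R ι : Type*} [CommRing R] [IsDomain R]
    {v : ι → R[X]} (hv : ∀ i, v i ≠ 0) (hdeg : Injective (degree ∘ v)) :
    LinearIndependent R v := by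
  refine linearIndependent_iff'.mpr fun s g hsum i hi => ?_
  have hdeg_smul : ∀ j, g j ≠ 0 → (g j • v j).degree = (v j).degree := fun j hj =>
    degree_smul_of_isRightRegular_leadingCoeff hj
      (IsRegular.of_ne_zero (leadingCoeff_ne_zero.mpr (hv j))).right
  by_contra hgi
  have hpairwise : {j | j ∈ s ∧ g j • v j ≠ 0}.Pairwise (Ne on fun j => (g j • v j).degree) := by
    intro j ⟨_, hj⟩ k ⟨_, hk⟩ hjk
    simp only [onFun, hdeg_smul j (left_ne_zero_of_smul hj),
      hdeg_smul k (left_ne_zero_of_smul hk)]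
    exact hdeg.ne hjk
  have hbot : (g i • v i).degree ≤ ⊥ := by
    calc (g i • v i).degree ≤ s.sup fun j => (g j • v j).degree :=
          Finset.le_sup (f := fun j => (g j • v j).degree) hi
      _ = (∑ j ∈ s, g j • v j).degree := (degree_sum_eq_of_disjoint _ s hpairwise).symm
      _ = ⊥ := by rw [hsum, degree_zero]
  rw [hdeg_smul i hgi] at hbot
  exact hv i (degree_eq_bot.mp (le_bot_iff.mp hbot))

theorem LinearIndependent.polynomial_eval_comp {K ι α : Type*} [Field K] [Infinite K]
    {v : ι → K[X]} (hv : LinearIndependent K v) {f : α → K} (hf : Function.Surjective f) :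
    LinearIndependent K fun i x => (v i).eval (f x) := by
  let E : K[X] →ₗ[K] α → K := LinearMap.pi fun x => leval (f x)
  have hE : LinearMap.ker E = ⊥ := by
    refine LinearMap.ker_eq_bot'.mpr fun p hp => Polynomial.funext fun t => ?_
    obtain ⟨x, rfl⟩ := hf t
    simpa [E] using congrFun hp x
  exact hv.map' E hE

section

variable (K : Type*) [Field K]

noncomputable def chebyshevCombination (q : ℕ) : K[X] :=
  C (1 / (2 * q : K)) * Chebyshev.T K q - C (1 / (2 * ((q : K) - 2))) * Chebyshev.T K (q - 2)

variable [CharZero K]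

theorem degree_chebyshevCombination {q : ℕ} (hq : 3 ≤ q) :
    (chebyshevCombination K q).degree = q := by
  have hq0 : (q : K) ≠ 0 := Nat.cast_ne_zero.mpr (by omega)
  have hq2 : (q : K) - 2 ≠ 0 := by
    rw [← Nat.cast_ofNat, ← Nat.cast_sub (by omega)]
    exact Nat.cast_ne_zero.mpr (by omega)
  have hlead : (C (1 / (2 * q : K)) * Chebyshev.T K q).degree = q := by
    rw [degree_C_mul (by simp [hq0]), Chebyshev.degree_T]; rfl
  have htail : (C (1 / (2 * ((q : K) - 2))) * Chebyshev.T K (q - 2)).degree = (q - 2 : ℕ) := by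
    rw [degree_C_mul (by simp [hq2]), Chebyshev.degree_T]; congr; omega
  have hlt : (q - 2 : ℕ) < (q : WithBot ℕ) := by exact_mod_cast Nat.sub_lt (by omega) two_pos
  rw [chebyshevCombination, degree_sub_eq_left_of_degree_lt (by rw [hlead, htail]; exact hlt), hlead]

theorem linearIndependent_chebyshevCombination :
    LinearIndependent K fun q : {q : ℕ // 3 ≤ q} => chebyshevCombination K q :=
  Polynomial.linearIndependent_of_injective_degree
    (fun q => ne_zero_of_coe_le_degree (degree_chebyshevCombination K q.2).ge)
    fun p q h => Subtype.ext <| by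
      simpa [degree_chebyshevCombination K p.2, degree_chebyshevCombination K q.2] using h

end

theorem dot_self_pos {b : ℝ × ℝ} (hb : b ≠ 0) : 0 < dot b b := by
  obtain h | h : b.1 ≠ 0 ∨ b.2 ≠ 0 := by
    contrapose! hb; exact Prod.ext hb.1 hb.2
  · exact add_pos_of_pos_of_nonneg (mul_self_pos.mpr h) (mul_self_nonneg _)
  · exact add_pos_of_nonneg_of_pos (mul_self_nonneg _) (mul_self_pos.mpr h)

theorem dot_surjective {b : ℝ × ℝ} (hb : b ≠ 0) : Function.Surjective (dot b) := fun t =>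
  ⟨(t / dot b b) • b, by
    have hscale : dot b ((t / dot b b) • b) = t / dot b b * dot b b := by
      simp only [dot, Prod.smul_fst, Prod.smul_snd, smul_eq_mul]; ring
    rw [hscale, div_mul_cancel₀ t (dot_self_pos hb).ne']⟩

/-- **Linear independence of the family (31).**  For a nonzero vector `b` of the
plane, the functions `u_q(x) = T_q(b·x)/(2q) − T_{q−2}(b·x)/(2(q−2))`, `q ≥ 3`,
are linearly independent over `ℝ` in the space of functions `ℝ × ℝ → ℝ`. -/
theorem chebyshev_combination_linearIndependent (b : ℝ × ℝ) (hb : b ≠ 0) :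
    LinearIndependent ℝ (fun q : {q : ℕ // 3 ≤ q} => (fun x : ℝ × ℝ =>
      (1 / (2 * (q : ℕ) : ℝ)) * eval (dot b x) (Polynomial.Chebyshev.T ℝ (q : ℕ))
        - (1 / (2 * ((q : ℕ) - 2) : ℝ))
            * eval (dot b x) (Polynomial.Chebyshev.T ℝ ((q : ℕ) - 2)))) := by
  simpa [chebyshevCombination] using
    (linearIndependent_chebyshevCombination ℝ).polynomial_eval_comp (dot_surjective hb)
end
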